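/- Define ū⁰(ξ,t) = δ e^{σt} e^{-γξ} on [0,1] × [0,T₀]. Suppose γ > 0 satisfies β(h(t)ξ,t)·h(t)/V(0,t) ≤ γ/2 on the domain, δ > 0 satisfies ‖u₀‖_∞ ≤ δe^{-γ} and C(t)/V(0,t) ≤ δ/2 for all t, and σ satisfies σ ≥ sup|V_x(h(t)ξ,t)| + γ·sup[(V(h(t)ξ,t) − ξh'(t))/h(t)] + 2δM‖η‖_∞·sup h(t). Then V(0,t)·ū⁰(0,t) ≥ C(t) + h(t)∫₀¹ β(h(t)ξ,t) ū⁰(ξ,t) dξ for all t ∈ [0,T₀] with T₀ = min(T, ln2/σ). -/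

import Mathlib

open Set MeasureTheory

lemma exp_int_aux (γ : ℝ) (hγ : 0 < γ) :
    ∫ ξ in (0:ℝ)..1, Real.exp (-γ * ξ) = (1 - Real.exp (-γ)) / γ := by
  have := intervalIntegral.integral_comp_mul_left (a := (0:ℝ)) (b := 1)
    (fun x => Real.exp x) (neg_ne_zero.mpr hγ.ne')
  rw [this]
  simp [integral_exp, smul_eq_mul]
  field_simp
  ring

/-- The function `ū⁰(ξ,t) = δ e^{σt} e^{-γξ}` dominates the renewal boundary
condition: under the stated choices of `γ`, `δ`, `σ`, for all `t ∈ [0,T₀]` with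
`T₀ = min T (ln 2 / σ)` one has
`V(0,t) ū⁰(0,t) ≥ C(t) + h(t) ∫₀¹ β(h(t)ξ,t) ū⁰(ξ,t) dξ`. -/
theorem upper_solution_boundary_inequality
    (T δ σ γ M ηnorm : ℝ)
    (hT : 0 < T) (hδ : 0 < δ) (hσ : 0 < σ) (hγ : 0 < γ) (hM : 0 < M)
    (hηnorm : 0 ≤ ηnorm)
    (h V0 C : ℝ → ℝ) (β Vx V : ℝ → ℝ → ℝ) (u₀ : ℝ → ℝ)
    (T₀ : ℝ) (hT₀ : T₀ = min T (Real.log 2 / σ))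
    (hhpos : ∀ t ∈ Icc (0:ℝ) T₀, 0 < h t)
    (hV0pos : ∀ t ∈ Icc (0:ℝ) T₀, 0 < V0 t)
    (hβ : ∀ t ∈ Icc (0:ℝ) T₀, ∀ ξ ∈ Icc (0:ℝ) 1, 0 ≤ β (h t * ξ) t)
    (hβcont : ∀ t ∈ Icc (0:ℝ) T₀, ContinuousOn (fun ξ => β (h t * ξ) t) (Icc 0 1))
    (hC : ∀ t ∈ Icc (0:ℝ) T₀, 0 ≤ C t)
    -- choice of γ
    (hγchoice : ∀ t ∈ Icc (0:ℝ) T₀, ∀ ξ ∈ Icc (0:ℝ) 1,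
      β (h t * ξ) t * h t / V0 t ≤ γ / 2)
    -- choice of δ
    (hδchoice₁ : ∀ x : ℝ, u₀ x ≤ δ * Real.exp (-γ))
    (hδchoice₂ : ∀ t ∈ Icc (0:ℝ) T₀, C t / V0 t ≤ δ / 2)
    -- choice of σ
    (hσchoice : ∀ t ∈ Icc (0:ℝ) T₀, ∀ ξ ∈ Icc (0:ℝ) 1,
      σ ≥ |Vx (h t * ξ) t| + γ * ((V (h t * ξ) t - ξ * deriv h t) / h t)
        + 2 * δ * M * ηnorm * h t) :
    ∀ t ∈ Icc (0:ℝ) T₀,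
      V0 t * (δ * Real.exp (σ * t) * Real.exp (-γ * 0))
        ≥ C t + h t * ∫ ξ in (0:ℝ)..1,
            β (h t * ξ) t * (δ * Real.exp (σ * t) * Real.exp (-γ * ξ)) := by
  intro t ht
  have hh := hhpos t ht
  have hV := hV0pos t ht
  set A : ℝ := δ * Real.exp (σ * t) with hA
  have hApos : 0 < A := by positivity
  have hδA : δ ≤ A := by
    have h1 : (1:ℝ) ≤ Real.exp (σ * t) := by
      apply Real.one_le_exp
      exact mul_nonneg hσ.le ht.1
    nlinarith
  set K : ℝ := γ / 2 * V0 t / h t with hK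
  have hKpos : 0 < K := by positivity
  -- pointwise bound on the integrand
  have key : ∀ ξ ∈ Icc (0:ℝ) 1,
      β (h t * ξ) t * (A * Real.exp (-γ * ξ)) ≤ K * (A * Real.exp (-γ * ξ)) := by
    intro ξ hξ
    have hb := hγchoice t ht ξ hξ
    rw [div_le_iff₀ hV] at hb
    have hβK : β (h t * ξ) t ≤ K := by
      rw [hK, le_div_iff₀ hh]
      nlinarith
    have hpos : 0 ≤ A * Real.exp (-γ * ξ) := by positivity
    exact mul_le_mul_of_nonneg_right hβK hpos
  -- integrability
  have hc2 : Continuous (fun ξ : ℝ => A * Real.exp (-γ * ξ)) :=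
    continuous_const.mul (Real.continuous_exp.comp (continuous_const.mul continuous_id))
  have hcont : ContinuousOn
      (fun ξ => β (h t * ξ) t * (A * Real.exp (-γ * ξ))) (Icc 0 1) :=
    (hβcont t ht).mul hc2.continuousOn
  have hint1 : IntervalIntegrable
      (fun ξ => β (h t * ξ) t * (A * Real.exp (-γ * ξ))) volume 0 1 :=
    hcont.intervalIntegrable_of_Icc zero_le_one
  have hint2 : IntervalIntegrable
      (fun ξ => K * (A * Real.exp (-γ * ξ))) volume 0 1 :=
    ((continuous_const.mul hc2).intervalIntegrable 0 1)
  have hmono := intervalIntegral.integral_mono_on zero_le_one hint1 hint2 key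
  -- compute the dominating integral
  have hgint : ∫ ξ in (0:ℝ)..1, K * (A * Real.exp (-γ * ξ))
      = K * A * ((1 - Real.exp (-γ)) / γ) := by
    have heq : (fun ξ => K * (A * Real.exp (-γ * ξ)))
        = fun ξ => (K * A) * Real.exp (-γ * ξ) := by
      funext ξ; ring
    rw [heq, intervalIntegral.integral_const_mul, exp_int_aux γ hγ]
  have hexpγ : 0 ≤ Real.exp (-γ) := (Real.exp_pos _).le
  have hexpγ1 : Real.exp (-γ) ≤ 1 := by
    rw [Real.exp_le_one_iff]; linarith
  have hbound : h t * ∫ ξ in (0:ℝ)..1,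
      β (h t * ξ) t * (A * Real.exp (-γ * ξ)) ≤ V0 t * A / 2 := by
    have h1 : h t * ∫ ξ in (0:ℝ)..1, β (h t * ξ) t * (A * Real.exp (-γ * ξ))
        ≤ h t * (K * A * ((1 - Real.exp (-γ)) / γ)) := by
      rw [← hgint]
      exact mul_le_mul_of_nonneg_left hmono hh.le
    have h2 : h t * (K * A * ((1 - Real.exp (-γ)) / γ)) ≤ V0 t * A / 2 := by
      rw [hK]
      have hne : h t ≠ 0 := hh.ne'
      have hγne : γ ≠ 0 := hγ.ne'
      have heq : h t * (γ / 2 * V0 t / h t * A * ((1 - Real.exp (-γ)) / γ))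
          = V0 t * A * (1 - Real.exp (-γ)) / 2 := by field_simp
      rw [heq]
      nlinarith [mul_nonneg (mul_nonneg hV.le hApos.le) hexpγ]
    linarith
  -- bound on C
  have hCb : C t ≤ V0 t * A / 2 := by
    have := hδchoice₂ t ht
    rw [div_le_iff₀ hV] at this
    nlinarith
  have hgoal : C t + h t * ∫ ξ in (0:ℝ)..1,
      β (h t * ξ) t * (A * Real.exp (-γ * ξ)) ≤ V0 t * A := by
    linarith
  simpa [hA, mul_zero, neg_zero, Real.exp_zero, ge_iff_le] using hgoal
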